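/- Let $1 < p < \infty$, let $\sigma$ and $\omega$ be locally finite Borel measures on $\mathbb{R}^n$, and let $\mathcal{S}$ be a countable collection of cubes such that the $\mathcal{S}$-maximal operators satisfy $M^{\mathcal{S}}_{\sigma} : L^p(\ell^2, \sigma) \to L^p(\ell^2, \sigma)$ and $M^{\mathcal{S}}_{\omega} : L^{p'}(\ell^2, \omega) \to L^{p'}(\ell^2, \omega)$ boundedly. Then $A_p^{\ell^2, \mathrm{local}, \mathcal{S}}(\sigma, \omega) \approx A_{p'}^{\ell^2, \mathrm{local}, \mathcal{S}}(\omega, \sigma)$, with implicit constants depending only on the maximal function bounds. -/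

import Mathlib

open MeasureTheory Set ENNReal
open scoped NNReal

/-- A (half-open, axis-parallel) cube in `ℝⁿ`. -/
def IsCube {n : ℕ} (s : Set (Fin n → ℝ)) : Prop :=
  ∃ (a : Fin n → ℝ) (l : ℝ), 0 < l ∧ s = {x | ∀ i, x i ∈ Set.Ico (a i) (a i + l)}

/-- The maximal operator associated to the collection of cubes `J : ι → Set ℝⁿ`,
relative to the measure `μ` (with the convention `0/0 = 0` of `ENNReal` division). -/
noncomputable def maxS {n : ℕ} {ι : Type} (J : ι → Set (Fin n → ℝ))
    (μ : Measure (Fin n → ℝ)) (f : (Fin n → ℝ) → ℝ≥0∞) (x : Fin n → ℝ) : ℝ≥0∞ :=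
  ⨆ (i : ι) (_ : x ∈ J i), (∫⁻ y in J i, f y ∂μ) / μ (J i)

/-- Vector-valued (ℓ²) boundedness of `maxS` on `L^p(μ)` with constant `B`. -/
def MaxSBounded {n : ℕ} {ι : Type} (J : ι → Set (Fin n → ℝ))
    (μ : Measure (Fin n → ℝ)) (p : ℝ) (B : ℝ≥0∞) : Prop :=
  ∀ g : ℕ → (Fin n → ℝ) → ℝ≥0∞, (∀ k, Measurable (g k)) →
    (∫⁻ x, (∑' k : ℕ, (maxS J μ (g k) x) ^ 2) ^ (p / 2) ∂μ) ^ (1 / p)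
      ≤ B * (∫⁻ x, (∑' k : ℕ, (g k x) ^ 2) ^ (p / 2) ∂μ) ^ (1 / p)

/-- The local quadratic Muckenhoupt characteristic `A_p^{ℓ²,local,𝒮}(σ,ω)`, defined
as the supremum of the ratios in the defining inequality (the "best constant"). -/
noncomputable def AquadS {n : ℕ} {ι : Type} (J : ι → Set (Fin n → ℝ)) (p : ℝ)
    (σ ω : Measure (Fin n → ℝ)) : ℝ≥0∞ :=
  ⨆ a : ι → ℝ≥0,
    (∫⁻ x, (∑' i : ι, ((a i : ℝ≥0∞)) ^ 2 * (σ (J i) / volume (J i)) ^ 2 *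
        (J i).indicator (fun _ => (1 : ℝ≥0∞)) x) ^ (p / 2) ∂ω) ^ (1 / p) /
    (∫⁻ x, (∑' i : ι, ((a i : ℝ≥0∞)) ^ 2 *
        (J i).indicator (fun _ => (1 : ℝ≥0∞)) x) ^ (p / 2) ∂σ) ^ (1 / p)

/-!
Both inequalities are one estimate, `A_p(σ, ω) ≤ B_ω · A_{p'}(ω, σ)`, applied to `(σ, ω, p)` and
to `(ω, σ, p')`. For finitely supported coefficients `a`, dualise the `L^p(ℓ², ω)` norm of
`(a_J (E_J σ) 1_J)_J` against a normalised `b ∈ L^{p'}(ℓ², ω)`. Since `∫_J b_J dω = c_J ω(J)` with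
`c_J` the `ω`-average of `b_J` over `J`, each pairing equals `∫ (a_J 1_J) (c_J (E_J ω) 1_J) dσ`, so
Hölder in `L^p(ℓ², σ)` bounds the sum by the `L^p(ℓ², σ)` norm of `(a_J 1_J)` times the
`L^{p'}(ℓ², σ)` norm of `(c_J (E_J ω) 1_J)`. By definition of `A_{p'}(ω, σ)` the latter is at most
`A_{p'}(ω, σ)` times the `L^{p'}(ℓ², ω)` norm of `(c_J 1_J)`, and `c_J 1_J ≤ M^𝒮_ω b_J`, so the
maximal bound makes this at most `B_ω`. Monotone convergence removes the finiteness of the support.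
-/

noncomputable def normLpL2 {α ι : Type*} [MeasurableSpace α] (μ : Measure α) (p : ℝ)
    (f : ι → α → ℝ≥0∞) : ℝ≥0∞ :=
  (∫⁻ x, (∑' i, f i x ^ 2) ^ (p / 2) ∂μ) ^ (1 / p)

theorem ENNReal.tsum_mul_le_sqrt_mul_sqrt {ι : Type*} (u v : ι → ℝ≥0∞) :
    ∑' i, u i * v i ≤ (∑' i, u i ^ 2) ^ (1 / 2 : ℝ) * (∑' i, v i ^ 2) ^ (1 / 2 : ℝ) := by
  let _ : MeasurableSpace ι := ⊤
  have hcs := lintegral_mul_le_Lp_mul_Lq (Measure.count : Measure ι) Real.HolderConjugate.two_two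
    (f := u) (g := v) Measurable.of_discrete.aemeasurable Measurable.of_discrete.aemeasurable
  simpa only [lintegral_count, Pi.mul_apply, ENNReal.rpow_two] using hcs

theorem ENNReal.mul_rpow_sub_one {t : ℝ≥0∞} (ht : t ≠ ∞) {s : ℝ} (hs : 0 < s) :
    t * t ^ (s - 1) = t ^ s := by
  calc t * t ^ (s - 1) = t ^ (1 : ℝ) * t ^ (s - 1) := by rw [ENNReal.rpow_one]
    _ = t ^ s := by rw [← ENNReal.rpow_add_of_add_pos ht _ _ (by linarith), add_sub_cancel]

/-- `u ‖u‖^{p-2}` with `‖u‖` the `ℓ²` norm: pointwise, the extremiser of Hölder's inequality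
in `L^p(ℓ²)`. -/
noncomputable def holderDual {ι : Type*} (p : ℝ) (u : ι → ℝ≥0∞) (i : ι) : ℝ≥0∞ :=
  u i * (∑' j, u j ^ 2) ^ (p / 2 - 1)

theorem tsum_mul_holderDual {ι : Type*} {p : ℝ} (hp : 0 < p) {u : ι → ℝ≥0∞}
    (hu : ∑' i, u i ^ 2 ≠ ∞) :
    ∑' i, u i * holderDual p u i = (∑' i, u i ^ 2) ^ (p / 2) := by
  simp_rw [holderDual, ← mul_assoc, ← pow_two]
  rw [ENNReal.tsum_mul_right, ENNReal.mul_rpow_sub_one hu (by positivity)]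

theorem tsum_holderDual_sq_rpow {ι : Type*} {p q : ℝ} (hpq : p.HolderConjugate q)
    {u : ι → ℝ≥0∞} (hu : ∑' i, u i ^ 2 ≠ ∞) :
    (∑' i, holderDual p u i ^ 2) ^ (q / 2) = (∑' i, u i ^ 2) ^ (p / 2) := by
  simp_rw [holderDual, mul_pow]
  rw [ENNReal.tsum_mul_right, ← rpow_two (_ ^ (p / 2 - 1)), ← rpow_mul,
    show (p / 2 - 1) * 2 = p - 1 - 1 by ring, ENNReal.mul_rpow_sub_one hu hpq.sub_one_pos,
    ← rpow_mul]
  congr 1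
  linear_combination hpq.sub_one_mul_conj / 2

section normLpL2

variable {α ι : Type*} [MeasurableSpace α] {μ : Measure α} {p : ℝ}

theorem normLpL2_zero (hp : 0 < p) : normLpL2 μ p (0 : ι → α → ℝ≥0∞) = 0 := by
  simp [normLpL2, hp]

theorem normLpL2_mono (hp : 0 ≤ p) {f g : ι → α → ℝ≥0∞} (h : ∀ i x, f i x ≤ g i x) :
    normLpL2 μ p f ≤ normLpL2 μ p g := by
  unfold normLpL2
  gcongr with x i
  exact h i x

theorem mul_rpow_le_normLpL2_indicator (hp : 0 < p) {S : ι → Set α}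
    (hS : ∀ i, MeasurableSet (S i)) (c : ι → ℝ≥0∞) (i : ι) :
    c i * μ (S i) ^ (1 / p) ≤ normLpL2 μ p (fun j => (S j).indicator fun _ => c j) := by
  have hpt : ∀ x, (S i).indicator (fun _ => c i ^ p) x
      ≤ (∑' j, (S j).indicator (fun _ => c j) x ^ 2) ^ (p / 2) := by
    intro x
    by_cases hx : x ∈ S i
    · calc (S i).indicator (fun _ => c i ^ p) x
            = ((S i).indicator (fun _ => c i) x ^ 2) ^ (p / 2) := by
              rw [indicator_of_mem hx, indicator_of_mem hx, ← ENNReal.rpow_two,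
                ← ENNReal.rpow_mul]
              ring_nf
        _ ≤ _ := by gcongr; exact ENNReal.le_tsum i
    · simp [hx]
  calc c i * μ (S i) ^ (1 / p) = (c i ^ p * μ (S i)) ^ (1 / p) := by
        rw [ENNReal.mul_rpow_of_nonneg _ _ (by positivity), ← ENNReal.rpow_mul,
          mul_one_div_cancel hp.ne', ENNReal.rpow_one]
    _ = (∫⁻ x, (S i).indicator (fun _ => c i ^ p) x ∂μ) ^ (1 / p) := by
        rw [lintegral_indicator_const (hS i)]
    _ ≤ _ := by unfold normLpL2; gcongr with x; exact hpt x

theorem normLpL2_indicator_ne_top (hp : 0 < p) {S : ι → Set α} (hS : ∀ i, MeasurableSet (S i))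
    (hμS : ∀ i, μ (S i) ≠ ∞) {c : ι → ℝ≥0∞} (hc : ∀ i, c i ≠ ∞) (s : Finset ι)
    (hcs : ∀ i ∉ s, c i = 0) :
    normLpL2 μ p (fun i => (S i).indicator fun _ => c i) ≠ ∞ := by
  set K := ∑ i ∈ s, c i ^ 2
  set U := ⋃ i ∈ s, S i
  have hsum : ∀ x, ∑' i, (S i).indicator (fun _ => c i) x ^ 2
      = ∑ i ∈ s, (S i).indicator (fun _ => c i) x ^ 2 :=
    fun x => tsum_eq_sum fun i hi => by simp [hcs i hi]
  have hpt : ∀ x, (∑' i, (S i).indicator (fun _ => c i) x ^ 2) ^ (p / 2)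
      ≤ U.indicator (fun _ => K ^ (p / 2)) x := by
    intro x
    rw [hsum]
    by_cases hx : x ∈ U
    · rw [indicator_of_mem hx]
      gcongr
      exact Finset.sum_le_sum fun i _ =>
        pow_le_pow_left₀ zero_le (indicator_apply_le' (fun _ => le_rfl) fun _ => zero_le) 2
    · have hxS : ∀ i ∈ s, x ∉ S i := fun i hi hxi => hx (mem_biUnion hi hxi)
      rw [indicator_of_notMem hx, Finset.sum_eq_zero fun i hi => by simp [hxS i hi],
        zero_rpow_of_pos (by positivity)]
  have hU : μ U ≠ ∞ := ((measure_biUnion_finset_le s S).trans_lt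
    (ENNReal.sum_lt_top.2 fun i _ => (hμS i).lt_top)).ne
  have hK : K ≠ ∞ := ENNReal.sum_ne_top.2 fun i _ => pow_ne_top (hc i)
  refine ENNReal.rpow_ne_top_of_nonneg (by positivity) (ne_top_of_le_ne_top ?_ (lintegral_mono hpt))
  rw [lintegral_indicator_const (s.measurableSet_biUnion fun i _ => hS i)]
  exact mul_ne_top (rpow_ne_top_of_nonneg (by positivity) hK) hU

variable [Countable ι]

theorem normLpL2_eq_iSup_finset [DecidableEq ι] (hp : 0 < p) {f : ι → α → ℝ≥0∞}
    (hf : ∀ i, Measurable (f i)) :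
    normLpL2 μ p f = ⨆ s : Finset ι, normLpL2 μ p (fun i => if i ∈ s then f i else 0) := by
  have hsum : ∀ (s : Finset ι) x,
      ∑' i, (if i ∈ s then f i else 0) x ^ 2 = ∑ i ∈ s, f i x ^ 2 := fun s x =>
    (tsum_eq_sum fun i hi => by simp [hi]).trans (Finset.sum_congr rfl fun i hi => by simp [hi])
  have hdir : Directed (· ≤ ·) fun (s : Finset ι) x => (∑ i ∈ s, f i x ^ 2) ^ (p / 2) :=
    fun s t => ⟨s ∪ t,
      fun x => rpow_le_rpow (Finset.sum_le_sum_of_subset Finset.subset_union_left) (by positivity),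
      fun x => rpow_le_rpow (Finset.sum_le_sum_of_subset Finset.subset_union_right) (by positivity)⟩
  simp only [normLpL2, hsum, ENNReal.tsum_eq_iSup_sum]
  calc (∫⁻ x, (⨆ s : Finset ι, ∑ i ∈ s, f i x ^ 2) ^ (p / 2) ∂μ) ^ (1 / p)
      = (⨆ s : Finset ι, ∫⁻ x, (∑ i ∈ s, f i x ^ 2) ^ (p / 2) ∂μ) ^ (1 / p) := by
        rw [← lintegral_iSup_directed (fun s => (Finset.measurable_sum s fun i _ =>
          (hf i).pow_const 2).pow_const _ |>.aemeasurable) hdir]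
        simp_rw [← orderIsoRpow_apply (p / 2) (by positivity), OrderIso.map_iSup]
    _ = _ := by
        simp_rw [← orderIsoRpow_apply (1 / p) (by positivity), OrderIso.map_iSup]

theorem tsum_lintegral_mul_le_normLpL2_mul {q : ℝ} (hpq : p.HolderConjugate q)
    {f g : ι → α → ℝ≥0∞} (hf : ∀ i, Measurable (f i)) (hg : ∀ i, Measurable (g i)) :
    ∑' i, ∫⁻ x, f i x * g i x ∂μ ≤ normLpL2 μ p f * normLpL2 μ q g := by
  rw [← lintegral_tsum (f := fun i x => f i x * g i x) fun i => ((hf i).mul (hg i)).aemeasurable]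
  have hsqrt : ∀ {h : ι → α → ℝ≥0∞}, (∀ i, Measurable (h i)) →
      Measurable fun x => (∑' i, h i x ^ 2) ^ (1 / 2 : ℝ) :=
    fun hh => (Measurable.tsum fun i => (hh i).pow_const 2).pow_const _
  calc ∫⁻ x, ∑' i, f i x * g i x ∂μ
      ≤ ∫⁻ x, (∑' i, f i x ^ 2) ^ (1 / 2 : ℝ) * (∑' i, g i x ^ 2) ^ (1 / 2 : ℝ) ∂μ :=
        lintegral_mono fun x => ENNReal.tsum_mul_le_sqrt_mul_sqrt _ _
    _ ≤ _ := lintegral_mul_le_Lp_mul_Lq μ hpq (hsqrt hf).aemeasurable (hsqrt hg).aemeasurable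
    _ = _ := by
        simp only [normLpL2, ← ENNReal.rpow_mul, one_div_mul_eq_div]

theorem exists_normLpL2_le_one_le_tsum_lintegral_mul {q : ℝ} (hpq : p.HolderConjugate q)
    {f : ι → α → ℝ≥0∞} (hf : ∀ i, Measurable (f i)) (hfin : normLpL2 μ p f ≠ ∞) :
    ∃ g : ι → α → ℝ≥0∞, (∀ i, Measurable (g i)) ∧ normLpL2 μ q g ≤ 1 ∧
      normLpL2 μ p f ≤ ∑' i, ∫⁻ x, f i x * g i x ∂μ := by
  have hp := hpq.pos
  have hq := hpq.symm.pos
  set F := fun x => ∑' i, f i x ^ 2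
  have hFm : Measurable F := Measurable.tsum fun i => (hf i).pow_const 2
  set N := ∫⁻ x, F x ^ (p / 2) ∂μ
  have hN : normLpL2 μ p f = N ^ (1 / p) := rfl
  have hNtop : N ≠ ∞ := fun h => hfin (by rw [hN, h, top_rpow_of_pos (by positivity)])
  rcases eq_or_ne N 0 with hN0 | hN0
  · refine ⟨0, fun _ => measurable_const, by simp [normLpL2_zero hq], ?_⟩
    rw [hN, hN0, zero_rpow_of_pos (by positivity)]
    exact zero_le
  have hFfin : ∀ᵐ x ∂μ, F x ≠ ∞ := (ae_lt_top (hFm.pow_const _) hNtop).mono fun x hx hF =>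
    hx.ne (by rw [hF, top_rpow_of_pos (by positivity)])
  set k := N ^ (-(1 / q))
  refine ⟨fun i x => holderDual p (fun j => f j x) i * k,
    fun i => ((hf i).mul (hFm.pow_const _)).mul_const _, ?_, ?_⟩
  · have hpt : ∀ᵐ x ∂μ, (∑' i, (holderDual p (fun j => f j x) i * k) ^ 2) ^ (q / 2)
        = F x ^ (p / 2) * N⁻¹ := hFfin.mono fun x hx => by
      simp_rw [mul_pow]
      rw [ENNReal.tsum_mul_right, mul_rpow_of_nonneg _ _ (by positivity),
        tsum_holderDual_sq_rpow hpq hx, ← rpow_two, ← rpow_mul, ← rpow_mul, ← rpow_neg_one N]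
      congr 2
      field_simp
    rw [normLpL2, lintegral_congr_ae hpt, lintegral_mul_const _ (hFm.pow_const _),
      ENNReal.mul_inv_cancel hN0 hNtop, one_rpow]
  · have hpt : ∀ᵐ x ∂μ, ∑' i, f i x * (holderDual p (fun j => f j x) i * k)
        = F x ^ (p / 2) * k := hFfin.mono fun x hx => by
      simp_rw [← mul_assoc]
      rw [ENNReal.tsum_mul_right, tsum_mul_holderDual hp hx]
    beta_reduce
    rw [← lintegral_tsum (f := fun i x => f i x * (holderDual p (fun j => f j x) i * k)) fun i =>
        ((hf i).mul (((hf i).mul (hFm.pow_const _)).mul_const _)).aemeasurable,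
      lintegral_congr_ae hpt, lintegral_mul_const _ (hFm.pow_const _), hN]
    refine (?_ : N ^ (1 / p) = N * k).le
    calc N ^ (1 / p) = N ^ ((1 : ℝ) + -(1 / q)) := by
          congr 1; linear_combination hpq.one_div_add_one_div
      _ = N * k := by rw [rpow_add _ _ hN0 hNtop, rpow_one]

end normLpL2

theorem lintegral_indicator_mul_eq_lintegral_indicator_mul_average {α : Type*}
    [MeasurableSpace α] {σ ω : Measure α} {S : Set α} (hS : MeasurableSet S) (hωS : ω S ≠ ∞)
    (a v : ℝ≥0∞) {b : α → ℝ≥0∞} (hb : Measurable b) :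
    ∫⁻ x, S.indicator (fun _ => a * (σ S / v)) x * b x ∂ω
      = ∫⁻ x, S.indicator (fun _ => a) x *
          S.indicator (fun _ => (∫⁻ y in S, b y ∂ω) / ω S * (ω S / v)) x ∂σ := by
  set avg := (∫⁻ y in S, b y ∂ω) / ω S
  have hint : ∫⁻ y in S, b y ∂ω = avg * ω S :=
    (ENNReal.div_mul_cancel' (fun h => by simp [Measure.restrict_eq_zero.2 h])
      fun h => absurd h hωS).symm
  have hω : ∀ x, S.indicator (fun _ => a * (σ S / v)) x * b x
      = S.indicator (fun x => a * (σ S / v) * b x) x := fun x => by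
    by_cases hx : x ∈ S <;> simp [hx]
  have hσ : ∀ x, S.indicator (fun _ => a) x * S.indicator (fun _ => avg * (ω S / v)) x
      = S.indicator (fun _ => a * (avg * (ω S / v))) x := fun x => by
    by_cases hx : x ∈ S <;> simp [hx]
  simp_rw [hω, hσ]
  rw [lintegral_indicator hS, lintegral_const_mul _ hb, lintegral_indicator_const hS, hint]
  simp only [div_eq_mul_inv]
  ring

namespace IsCube

variable {n : ℕ} {s : Set (Fin n → ℝ)}

theorem exists_eq_pi (h : IsCube s) :
    ∃ (a : Fin n → ℝ) (l : ℝ), 0 < l ∧ s = univ.pi fun i => Ico (a i) (a i + l) := by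
  obtain ⟨a, l, hl, rfl⟩ := h
  exact ⟨a, l, hl, by ext; simp⟩

theorem measurableSet (h : IsCube s) : MeasurableSet s := by
  obtain ⟨a, l, -, rfl⟩ := h.exists_eq_pi
  exact MeasurableSet.univ_pi fun i => measurableSet_Ico

theorem measure_ne_top (h : IsCube s) (μ : Measure (Fin n → ℝ)) [IsLocallyFiniteMeasure μ] :
    μ s ≠ ∞ := by
  obtain ⟨a, l, -, rfl⟩ := h.exists_eq_pi
  have hsub : (univ.pi fun i => Ico (a i) (a i + l)) ⊆ univ.pi fun i => Icc (a i) (a i + l) :=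
    pi_mono fun i _ => Ico_subset_Icc_self
  exact ((measure_mono hsub).trans_lt (isCompact_univ_pi fun i => isCompact_Icc).measure_lt_top).ne

theorem volume_ne_zero (h : IsCube s) : volume s ≠ 0 := by
  obtain ⟨a, l, hl, rfl⟩ := h.exists_eq_pi
  rw [volume_pi_pi]
  exact Finset.prod_ne_zero_iff.2 fun i _ => by simp [Real.volume_Ico, hl]

end IsCube

section maxS

variable {n : ℕ} {ι : Type} (J : ι → Set (Fin n → ℝ)) (μ : Measure (Fin n → ℝ))

theorem maxS_zero : maxS J μ 0 = 0 := by
  funext x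
  simp [maxS]

theorem indicator_average_le_maxS (f : (Fin n → ℝ) → ℝ≥0∞) (i : ι) (x : Fin n → ℝ) :
    (J i).indicator (fun _ => (∫⁻ y in J i, f y ∂μ) / μ (J i)) x ≤ maxS J μ f x :=
  indicator_apply_le' (fun hx => le_iSup₂_of_le (f := fun j (_ : x ∈ J j) => _) i hx le_rfl)
    fun _ => zero_le

variable {J μ}

theorem MaxSBounded.normLpL2_maxS_le {p : ℝ} {B : ℝ≥0∞} (hM : MaxSBounded J μ p B) {κ : Type*}
    [Countable κ] {g : κ → (Fin n → ℝ) → ℝ≥0∞} (hg : ∀ i, Measurable (g i)) :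
    normLpL2 μ p (fun i => maxS J μ (g i)) ≤ B * normLpL2 μ p g := by
  obtain ⟨e, he⟩ := exists_injective_nat κ
  set g' := Function.extend e g 0
  have hsum : ∀ H : ((Fin n → ℝ) → ℝ≥0∞) → ℝ≥0∞, H 0 = 0 →
      ∑' k, H (g' k) = ∑' i, H (g i) := fun H hH => by
    have hH0 : H ∘ (0 : ℕ → (Fin n → ℝ) → ℝ≥0∞) = 0 := funext fun _ => hH
    simp_rw [g', Function.apply_extend H, hH0]
    exact tsum_extend_zero he (H ∘ g)
  have hg' : ∀ k, Measurable (g' k) := fun k => by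
    by_cases hk : ∃ i, e i = k
    · obtain ⟨i, rfl⟩ := hk
      simpa [g', he.extend_apply] using hg i
    · rw [show g' k = 0 from Function.extend_apply' _ _ _ hk]
      exact measurable_const
  have hmax : ∀ x, ∑' k, maxS J μ (g' k) x ^ 2 = ∑' i, maxS J μ (g i) x ^ 2 :=
    fun x => hsum (fun h => maxS J μ h x ^ 2) (by simp [maxS_zero])
  have hself : ∀ x, ∑' k, g' k x ^ 2 = ∑' i, g i x ^ 2 :=
    fun x => hsum (fun h => h x ^ 2) (by simp)
  simpa only [normLpL2, hmax, hself] using hM g' hg'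

end maxS

section AquadS

variable {n : ℕ} {ι : Type} {J : ι → Set (Fin n → ℝ)} {p : ℝ} {σ ω : Measure (Fin n → ℝ)}

theorem AquadS_eq_iSup_normLpL2 (J : ι → Set (Fin n → ℝ)) (p : ℝ) (σ ω : Measure (Fin n → ℝ)) :
    AquadS J p σ ω = ⨆ a : ι → ℝ≥0,
      normLpL2 ω p (fun i => (J i).indicator fun _ => a i * (σ (J i) / volume (J i))) /
        normLpL2 σ p (fun i => (J i).indicator fun _ => (a i : ℝ≥0∞)) := by
  have hsq : ∀ (S : Set (Fin n → ℝ)) (c : ℝ≥0∞) x,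
      S.indicator (fun _ => c) x ^ 2 = c ^ 2 * S.indicator (fun _ => 1) x := fun S c x => by
    by_cases hx : x ∈ S <;> simp [hx]
  simp only [AquadS, normLpL2, hsq, mul_pow]

theorem normLpL2_le_AquadS_mul (hJ : ∀ i, MeasurableSet (J i)) (hp : 0 < p) {a : ι → ℝ≥0∞}
    (ha : ∀ i, a i ≠ ∞) (hden : normLpL2 σ p (fun i => (J i).indicator fun _ => a i) ≠ ∞) :
    normLpL2 ω p (fun i => (J i).indicator fun _ => a i * (σ (J i) / volume (J i)))
      ≤ AquadS J p σ ω * normLpL2 σ p (fun i => (J i).indicator fun _ => a i) := by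
  rcases eq_or_ne (normLpL2 σ p (fun i => (J i).indicator fun _ => a i)) 0 with h0 | h0
  · have hvanish : ∀ i, a i * (σ (J i) / volume (J i)) = 0 := fun i => by
      rcases mul_eq_zero.1 (nonpos_iff_eq_zero.1 <|
        (mul_rpow_le_normLpL2_indicator hp hJ a i).trans_eq h0) with h | h
      · simp [h]
      · simp [(rpow_eq_zero_iff_of_pos (by positivity)).1 h]
    have hzero : (fun i => (J i).indicator fun _ => a i * (σ (J i) / volume (J i))) = 0 := by
      funext i x
      simp [hvanish]
    rw [hzero, normLpL2_zero hp]
    exact zero_le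
  · rw [AquadS_eq_iSup_normLpL2, ← ENNReal.div_le_iff h0 hden]
    refine le_iSup_of_le (fun i => (a i).toNNReal) ?_
    simp only [coe_toNNReal (ha _), le_rfl]

theorem normLpL2_le_mul_AquadS_mul_of_ne_top [Countable ι] (hJ : ∀ i, MeasurableSet (J i))
    (hωJ : ∀ i, ω (J i) ≠ ∞) {q : ℝ} (hpq : p.HolderConjugate q) {B : ℝ≥0∞} (hB : B ≠ ∞)
    (hM : MaxSBounded J ω q B) (a : ι → ℝ≥0∞)
    (hfin : normLpL2 ω p (fun i => (J i).indicator fun _ => a i * (σ (J i) / volume (J i))) ≠ ∞) :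
    normLpL2 ω p (fun i => (J i).indicator fun _ => a i * (σ (J i) / volume (J i)))
      ≤ B * AquadS J q ω σ * normLpL2 σ p (fun i => (J i).indicator fun _ => a i) := by
  have hq := hpq.symm.pos
  have hind : ∀ (c : ι → ℝ≥0∞) i, Measurable ((J i).indicator fun _ => c i) :=
    fun c i => measurable_const.indicator (hJ i)
  obtain ⟨b, hbm, hb1, hdual⟩ := exists_normLpL2_le_one_le_tsum_lintegral_mul hpq (hind _) hfin
  set c := fun i => (∫⁻ y in J i, b i y ∂ω) / ω (J i)
  have hcM : normLpL2 ω q (fun i => (J i).indicator fun _ => c i) ≤ B :=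
    calc _ ≤ normLpL2 ω q (fun i => maxS J ω (b i)) :=
          normLpL2_mono hq.le fun i => indicator_average_le_maxS J ω (b i) i
      _ ≤ B * normLpL2 ω q b := hM.normLpL2_maxS_le hbm
      _ ≤ B := mul_le_of_le_one_right' hb1
  have hc : ∀ i, c i ≠ ∞ := fun i => by
    rcases eq_or_ne (ω (J i)) 0 with h | h
    · simp [c, Measure.restrict_eq_zero.2 h]
    · intro hci
      have := (mul_rpow_le_normLpL2_indicator hq hJ c i).trans hcM
      rw [hci, top_mul (ENNReal.rpow_pos (pos_iff_ne_zero.2 h) (hωJ i)).ne'] at this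
      exact hB (top_le_iff.1 this)
  calc _ ≤ ∑' i, ∫⁻ x, (J i).indicator (fun _ => a i * (σ (J i) / volume (J i))) x * b i x ∂ω :=
        hdual
    _ = ∑' i, ∫⁻ x, (J i).indicator (fun _ => a i) x *
          (J i).indicator (fun _ => c i * (ω (J i) / volume (J i))) x ∂σ := tsum_congr fun i =>
        lintegral_indicator_mul_eq_lintegral_indicator_mul_average (hJ i) (hωJ i) _ _ (hbm i)
    _ ≤ normLpL2 σ p (fun i => (J i).indicator fun _ => a i) *
          normLpL2 σ q (fun i => (J i).indicator fun _ => c i * (ω (J i) / volume (J i))) :=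
        tsum_lintegral_mul_le_normLpL2_mul hpq (hind _) (hind _)
    _ ≤ normLpL2 σ p (fun i => (J i).indicator fun _ => a i) *
          (AquadS J q ω σ * normLpL2 ω q (fun i => (J i).indicator fun _ => c i)) := by
        gcongr
        exact normLpL2_le_AquadS_mul hJ hq hc (ne_top_of_le_ne_top hB hcM)
    _ ≤ normLpL2 σ p (fun i => (J i).indicator fun _ => a i) * (AquadS J q ω σ * B) := by
        gcongr
    _ = B * AquadS J q ω σ * normLpL2 σ p (fun i => (J i).indicator fun _ => a i) := by ring

theorem AquadS_le_mul_AquadS [Countable ι] (hJ : ∀ i, MeasurableSet (J i))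
    (hσJ : ∀ i, σ (J i) ≠ ∞) (hωJ : ∀ i, ω (J i) ≠ ∞) (hvol : ∀ i, volume (J i) ≠ 0) {q : ℝ}
    (hpq : p.HolderConjugate q) {B : ℝ≥0∞} (hB : B ≠ ∞) (hM : MaxSBounded J ω q B) :
    AquadS J p σ ω ≤ B * AquadS J q ω σ := by
  classical
  have hp := hpq.pos
  rw [AquadS_eq_iSup_normLpL2 J p σ ω]
  refine iSup_le fun a => ENNReal.div_le_of_le_mul ?_
  rw [normLpL2_eq_iSup_finset hp fun i => measurable_const.indicator (hJ i)]
  refine iSup_le fun s => ?_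
  set as : ι → ℝ≥0∞ := fun i => if i ∈ s then (a i : ℝ≥0∞) else 0
  have has : ∀ i, as i ≤ a i := fun i => by unfold as; split_ifs <;> simp
  have htrunc : (fun i => if i ∈ s then (J i).indicator
      (fun _ => (a i : ℝ≥0∞) * (σ (J i) / volume (J i))) else 0)
      = fun i => (J i).indicator fun _ => as i * (σ (J i) / volume (J i)) := by
    funext i
    unfold as
    split_ifs <;> simp [Pi.zero_def]
  have hfin := normLpL2_indicator_ne_top hp hJ hωJ
    (c := fun i => as i * (σ (J i) / volume (J i)))
    (fun i => mul_ne_top (by unfold as; split_ifs <;> simp) (div_ne_top (hσJ i) (hvol i))) s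
    (fun i hi => by simp [as, hi])
  rw [htrunc]
  calc _ ≤ B * AquadS J q ω σ * normLpL2 σ p (fun i => (J i).indicator fun _ => as i) :=
        normLpL2_le_mul_AquadS_mul_of_ne_top hJ hωJ hpq hB hM as hfin
    _ ≤ _ := by
        gcongr
        exact normLpL2_mono hp.le fun i _ => indicator_le_indicator (has i)

end AquadS

/-- Duality of the quadratic Muckenhoupt conditions: if the `𝒮`-maximal operators are
bounded on `L^p(ℓ²,σ)` and `L^{p'}(ℓ²,ω)` respectively, then
`A_p^{ℓ²,local,𝒮}(σ,ω) ≈ A_{p'}^{ℓ²,local,𝒮}(ω,σ)`, with constants depending only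
on `p` and the maximal function bounds. -/
theorem stmt3 (p p' : ℝ) (hp : 1 < p) (hpp' : 1 / p + 1 / p' = 1)
    (Bσ Bω : ℝ≥0∞) (hBσ : Bσ < ∞) (hBω : Bω < ∞) :
    ∃ C : ℝ≥0∞, 0 < C ∧ C < ∞ ∧
      ∀ (n : ℕ) (ι : Type) (_ : Countable ι) (J : ι → Set (Fin n → ℝ)),
        (∀ i, IsCube (J i)) →
        ∀ (σ ω : Measure (Fin n → ℝ)) [IsLocallyFiniteMeasure σ] [IsLocallyFiniteMeasure ω],
          MaxSBounded J σ p Bσ → MaxSBounded J ω p' Bω →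
          AquadS J p σ ω ≤ C * AquadS J p' ω σ ∧
          AquadS J p' ω σ ≤ C * AquadS J p σ ω := by
  have hpq : p.HolderConjugate p' :=
    Real.holderConjugate_iff.2 ⟨hp, by simpa only [one_div] using hpp'⟩
  refine ⟨max (max Bσ Bω) 1, lt_max_of_lt_right one_pos,
    max_lt (max_lt hBσ hBω) one_lt_top, ?_⟩
  intro n ι _ J hJ σ ω _ _ hMσ hMω
  have hJm i := (hJ i).measurableSet
  have hσJ i := (hJ i).measure_ne_top σ
  have hωJ i := (hJ i).measure_ne_top ω
  have hvol i := (hJ i).volume_ne_zero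
  constructor
  · refine (AquadS_le_mul_AquadS hJm hσJ hωJ hvol hpq hBω.ne hMω).trans ?_
    gcongr
    exact (le_max_right _ _).trans (le_max_left _ _)
  · refine (AquadS_le_mul_AquadS hJm hωJ hσJ hvol hpq.symm hBσ.ne hMσ).trans ?_
    gcongr
    exact (le_max_left _ _).trans (le_max_left _ _)
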